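/- arXiv:1503.05303 — 2 statements merged into one kernel-verified Lean document; each statement's English description precedes it below -/
import Mathlib

section
/- Let (A,A⁻), (B,B⁻), (C,C⁻) be oriented rectangles and Ψ, Φ continuous maps. If Ψ stretches (A,A⁻) to (B,B⁻) along paths with crossing number M ≥ 1 and Φ stretches (B,B⁻) to (C,C⁻) along paths with crossing number N ≥ 1, then the composition Φ ∘ Ψ stretches (A,A⁻) to (C,C⁻) along paths with crossing number M·N. -/
/-!
A crossing of `(A, A⁻)` by `(H, Ψ)` restricts a path `γ` to a subinterval `[t', t'']` whose image
under `Ψ` is a path in `B` joining the two sides of `B⁻`. Reparametrizing it over `[0, 1]` and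
feeding it to a crossing `(K, Φ)` of `(B, B⁻)` yields a subinterval on which `γ` stays in
`H ∩ Ψ⁻¹ K` and `Φ ∘ Ψ ∘ γ` crosses `C`. The `M · N` sets `Hᵢ ∩ Ψ⁻¹ Kⱼ` are pairwise disjoint
because the `Hᵢ` are and the `Kⱼ` are.
-/

open Set

noncomputable section

/-- `(R, R1 ∪ R2)` is an oriented rectangle: `R` is homeomorphic to `[0,1]²` and
`R1`, `R2` are disjoint compact arcs contained in the boundary of `R`. -/
def IsOrientedRect (R R1 R2 : Set (ℝ × ℝ)) : Prop :=
  Nonempty (↥R ≃ₜ (↥(Set.Icc (0:ℝ) 1) × ↥(Set.Icc (0:ℝ) 1))) ∧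
  Nonempty (↥R1 ≃ₜ ↥(Set.Icc (0:ℝ) 1)) ∧
  Nonempty (↥R2 ≃ₜ ↥(Set.Icc (0:ℝ) 1)) ∧
  R1 ⊆ frontier R ∧ R2 ⊆ frontier R ∧ Disjoint R1 R2

/-- `(H, Ψ)` stretches the oriented rectangle `(A, A1 ∪ A2)` to `(B, B1 ∪ B2)` along paths. -/
def StretchesAlong (H : Set (ℝ × ℝ)) (Ψ : ℝ × ℝ → ℝ × ℝ)
    (A A1 A2 B B1 B2 : Set (ℝ × ℝ)) : Prop :=
  IsCompact H ∧ H ⊆ A ∧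
  ∀ γ : ℝ → ℝ × ℝ, ContinuousOn γ (Set.Icc 0 1) →
    (∀ t ∈ Set.Icc (0:ℝ) 1, γ t ∈ A) →
    ((γ 0 ∈ A1 ∧ γ 1 ∈ A2) ∨ (γ 0 ∈ A2 ∧ γ 1 ∈ A1)) →
    ∃ t' t'' : ℝ, t' ≤ t'' ∧ t' ∈ Set.Icc (0:ℝ) 1 ∧ t'' ∈ Set.Icc (0:ℝ) 1 ∧
      (∀ t ∈ Set.Icc t' t'', γ t ∈ H ∧ Ψ (γ t) ∈ B) ∧
      ((Ψ (γ t') ∈ B1 ∧ Ψ (γ t'') ∈ B2) ∨ (Ψ (γ t') ∈ B2 ∧ Ψ (γ t'') ∈ B1))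

/-- `Ψ` stretches `(A, A1 ∪ A2)` to `(B, B1 ∪ B2)` along paths with crossing number `N`. -/
def StretchesN (Ψ : ℝ × ℝ → ℝ × ℝ) (A A1 A2 B B1 B2 : Set (ℝ × ℝ)) (N : ℕ) : Prop :=
  ∃ H : Fin N → Set (ℝ × ℝ),
    (∀ i j : Fin N, i ≠ j → Disjoint (H i) (H j)) ∧
    ∀ i : Fin N, StretchesAlong (H i) Ψ A A1 A2 B B1 B2

open AffineMap in
theorem StretchesAlong.comp {H K : Set (ℝ × ℝ)} {Ψ Φ : ℝ × ℝ → ℝ × ℝ}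
    {A A1 A2 B B1 B2 C C1 C2 : Set (ℝ × ℝ)} (hΨ : ContinuousOn Ψ H)
    (hH : StretchesAlong H Ψ A A1 A2 B B1 B2) (hK : StretchesAlong K Φ B B1 B2 C C1 C2) :
    StretchesAlong (H ∩ Ψ ⁻¹' K) (Φ ∘ Ψ) A A1 A2 C C1 C2 := by
  obtain ⟨hHc, hHA, hHγ⟩ := hH
  obtain ⟨hKc, -, hKγ⟩ := hK
  refine ⟨hHc.of_isClosed_subset (hΨ.preimage_isClosed_of_isClosed hHc.isClosed hKc.isClosed)
    inter_subset_left, inter_subset_left.trans hHA, fun γ hγ hγA hγends => ?_⟩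
  obtain ⟨t', t'', htt, ht', ht'', hγH, hΨends⟩ := hHγ γ hγ hγA hγends
  set ℓ : ℝ → ℝ := ⇑(lineMap (k := ℝ) t' t'')
  have hℓ_mono : Monotone ℓ := lineMap_mono htt
  have hℓ_maps : MapsTo ℓ (Icc 0 1) (Icc t' t'') := by
    simpa only [ℓ, lineMap_apply_zero, lineMap_apply_one] using hℓ_mono.mapsTo_Icc (a := 0) (b := 1)
  have hℓ_cont : Continuous ℓ := by fun_prop
  have hsub : Icc t' t'' ⊆ Icc 0 1 := Icc_subset_Icc ht'.1 ht''.2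
  have hδ : ContinuousOn (Ψ ∘ γ ∘ ℓ) (Icc 0 1) :=
    hΨ.comp (hγ.comp hℓ_cont.continuousOn (hℓ_maps.mono_right hsub))
      fun s hs => (hγH _ (hℓ_maps hs)).1
  obtain ⟨s', s'', hss, hs', hs'', hδK, hΦends⟩ :=
    hKγ (Ψ ∘ γ ∘ ℓ) hδ (fun s hs => (hγH _ (hℓ_maps hs)).2)
      (by simpa only [Function.comp, ℓ, lineMap_apply_zero, lineMap_apply_one] using hΨends)
  refine ⟨ℓ s', ℓ s'', hℓ_mono hss, hsub (hℓ_maps hs'), hsub (hℓ_maps hs''), ?_, hΦends⟩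
  intro t ht
  obtain ⟨s, hs, rfl⟩ := intermediate_value_Icc hss hℓ_cont.continuousOn ht
  have hs01 : s ∈ Icc (0 : ℝ) 1 := ⟨hs'.1.trans hs.1, hs.2.trans hs''.2⟩
  exact ⟨⟨(hγH _ (hℓ_maps hs01)).1, (hδK s hs).1⟩, (hδK s hs).2⟩

theorem StretchesN.comp {Ψ Φ : ℝ × ℝ → ℝ × ℝ} {A A1 A2 B B1 B2 C C1 C2 : Set (ℝ × ℝ)}
    {M N : ℕ} (hΨ : Continuous Ψ) (hΨAB : StretchesN Ψ A A1 A2 B B1 B2 M)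
    (hΦBC : StretchesN Φ B B1 B2 C C1 C2 N) :
    StretchesN (Φ ∘ Ψ) A A1 A2 C C1 C2 (M * N) := by
  obtain ⟨H, hHdisj, hH⟩ := hΨAB
  obtain ⟨K, hKdisj, hK⟩ := hΦBC
  let e := (finProdFinEquiv (m := M) (n := N)).symm
  refine ⟨fun k => H (e k).1 ∩ Ψ ⁻¹' K (e k).2, fun k l hkl => ?_,
    fun k => (hH _).comp hΨ.continuousOn (hK _)⟩
  obtain hH1 | hK2 : (e k).1 ≠ (e l).1 ∨ (e k).2 ≠ (e l).2 := by
    rw [← not_and_or, ← Prod.ext_iff]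
    exact e.injective.ne hkl
  · exact (hHdisj _ _ hH1).mono inter_subset_left inter_subset_left
  · exact ((hKdisj _ _ hK2).preimage Ψ).mono inter_subset_right inter_subset_right

theorem stmt_8_general
    (A A1 A2 B B1 B2 C C1 C2 : Set (ℝ × ℝ))
    (Ψ Φ : ℝ × ℝ → ℝ × ℝ) (hΨ : Continuous Ψ)
    (M N : ℕ)
    (h1 : StretchesN Ψ A A1 A2 B B1 B2 M)
    (h2 : StretchesN Φ B B1 B2 C C1 C2 N) :
    StretchesN (Φ ∘ Ψ) A A1 A2 C C1 C2 (M * N) :=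
  h1.comp hΨ h2

theorem stmt_8
    (A A1 A2 B B1 B2 C C1 C2 : Set (ℝ × ℝ))
    (hA : IsOrientedRect A A1 A2) (hB : IsOrientedRect B B1 B2) (hC : IsOrientedRect C C1 C2)
    (Ψ Φ : ℝ × ℝ → ℝ × ℝ) (hΨ : Continuous Ψ) (hΦ : Continuous Φ)
    (M N : ℕ) (hM : 1 ≤ M) (hN : 1 ≤ N)
    (h1 : StretchesN Ψ A A1 A2 B B1 B2 M)
    (h2 : StretchesN Φ B B1 B2 C C1 C2 N) :
    StretchesN (Φ ∘ Ψ) A A1 A2 C C1 C2 (M * N) :=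
  stmt_8_general A A1 A2 B B1 B2 C C1 C2 Ψ Φ hΨ M N h1 h2
end
end

section
/- Let 0 < a₋ ≤ a₊ < 1, let q: ℝ → ℝ be locally integrable with a₋ ≤ q(t) ≤ a₊ for almost every t ≤ t₀, and let ε > 0 be such that a₋ − ε > 0. If (x, y) is a solution of the system x′ = y, y′ = x(x−1)(x−q(t)) satisfying 0 < x(t) ≤ a₋ − ε and y(t) > 0 for every t ≤ t₀, then x(t) → 0 and y(t) → 0 as t → −∞. -/
/-!
On `(-∞, t₀]` both `x' = y` and `y' = x(1 - x)(q - x)` are positive, so `x` and `y` increase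
there and, being positive, converge to limits `L, M ≥ 0` as `t → -∞`. A positive lower bound on
the derivative of a function that stays nonnegative on `(-∞, t₀]` is impossible, since integrating
it backwards from `t₀` drives the function to `-∞`. Applied to `x' = y ≥ M` this forces `M = 0`,
and applied to `y' ≥ L (1 - (a₋ - ε)) ε` it forces `L = 0`.
-/

open MeasureTheory Filter Set

noncomputable section

/-- `(x, y)` is a solution of the system `x' = y`, `y' = x(x-1)(x-q(t))`:
`x` is `C¹` with derivative `y`, and `y` is locally absolutely continuous with
`y'(t) = x(t)(x(t)-1)(x(t)-q(t))` for a.e. `t` (encoded via the integral formulation,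
anchored at `t₀`). -/
def IsSolQ (q : ℝ → ℝ) (t₀ : ℝ) (x y : ℝ → ℝ) : Prop :=
  (∀ t : ℝ, HasDerivAt x (y t) t) ∧
  (∀ t : ℝ, y t = y t₀ + ∫ s in t₀..t, x s * (x s - 1) * (x s - q s))

section Integral

variable {u w : ℝ → ℝ} {t₀ : ℝ}

theorem monotoneOn_Iic_of_sub_eq_integral (hu : ∀ s t, u t - u s = ∫ r in s..t, w r)
    (hw : ∀ᵐ r, r ≤ t₀ → 0 ≤ w r) : MonotoneOn u (Iic t₀) := by
  intro s _ t ht hst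
  have : 0 ≤ ∫ r in s..t, w r := by
    refine intervalIntegral.integral_nonneg_of_ae_restrict hst ?_
    filter_upwards [ae_restrict_mem measurableSet_Icc, ae_restrict_of_ae hw] with r hr hwr
    exact hwr (hr.2.trans ht)
  linarith [hu s t]

theorem nonpos_of_ae_le_of_sub_eq_integral {K : ℝ}
    (hu : ∀ t ≤ t₀, u t₀ - u t = ∫ r in t..t₀, w r)
    (hw : ∀ t ≤ t₀, IntervalIntegrable w volume t t₀)
    (hnonneg : ∀ t ≤ t₀, 0 ≤ u t) (hK : ∀ᵐ r, r ≤ t₀ → K ≤ w r) : K ≤ 0 := by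
  by_contra! hKpos
  set t := t₀ - (|u t₀| + 1) / K
  have ht : t ≤ t₀ := sub_le_self _ (by positivity)
  have hint : ∫ _ in t..t₀, K ≤ ∫ r in t..t₀, w r := by
    refine intervalIntegral.integral_mono_ae_restrict ht intervalIntegrable_const (hw t ht) ?_
    filter_upwards [ae_restrict_mem measurableSet_Icc, ae_restrict_of_ae hK] with r hr hKr
    exact hKr hr.2
  have hlen : (t₀ - t) * K = |u t₀| + 1 := by
    simp only [t, sub_sub_cancel, div_mul_cancel₀ _ hKpos.ne']
  rw [intervalIntegral.integral_const, smul_eq_mul, hlen, ← hu t ht] at hint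
  linarith [hnonneg t ht, le_abs_self (u t₀)]

end Integral

theorem tendsto_atBot_zero_of_monotoneOn_Iic {u : ℝ → ℝ} {t₀ : ℝ}
    (hmono : MonotoneOn u (Iic t₀)) (hnonneg : ∀ t ≤ t₀, 0 ≤ u t)
    (hinf : ∀ L, 0 < L → ¬ ∀ t ≤ t₀, L ≤ u t) : Tendsto u atBot (nhds 0) := by
  set g : ℝ → ℝ := fun t => u (min t t₀)
  have hg : Monotone g := fun s t hst =>
    hmono (min_le_right s t₀) (min_le_right t t₀) (min_le_min_right t₀ hst)
  have hbdd : BddBelow (range g) := ⟨0, by rintro _ ⟨t, rfl⟩; exact hnonneg _ (min_le_right t t₀)⟩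
  have hL : ⨅ t, g t = 0 := by
    refine le_antisymm (not_lt.1 fun hpos => hinf _ hpos fun t ht => ?_)
      (le_ciInf fun t => hnonneg _ (min_le_right t t₀))
    simpa [g, min_eq_left ht] using ciInf_le hbdd t
  refine (hL ▸ tendsto_atBot_ciInf hg hbdd).congr' ?_
  filter_upwards [eventually_le_atBot t₀] with t ht
  simp [g, min_eq_left ht]

theorem mul_le_mul_sub_one_mul_sub {L ξ p b ε : ℝ} (hL : 0 ≤ L) (hLξ : L ≤ ξ) (hξb : ξ ≤ b)
    (hbp : b + ε ≤ p) (hb : b < 1) (hε : 0 ≤ ε) : L * ((1 - b) * ε) ≤ ξ * (ξ - 1) * (ξ - p) :=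
  calc L * ((1 - b) * ε) ≤ ξ * ((1 - ξ) * (p - ξ)) := by
        gcongr
        · exact hL.trans hLξ
        · linarith
        · linarith
    _ = ξ * (ξ - 1) * (ξ - p) := by ring

namespace IsSolQ

variable {q : ℝ → ℝ} {t₀ : ℝ} {x y : ℝ → ℝ}

theorem continuous_fst (hsol : IsSolQ q t₀ x y) : Continuous x :=
  continuous_iff_continuousAt.2 fun t => (hsol.1 t).continuousAt

theorem intervalIntegrable_rhs (hsol : IsSolQ q t₀ x y) (hq : LocallyIntegrable q volume)
    (a b : ℝ) : IntervalIntegrable (fun s => x s * (x s - 1) * (x s - q s)) volume a b := by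
  have hx := hsol.continuous_fst
  have hpoly : Continuous fun s => x s * (x s - 1) := hx.mul (hx.sub continuous_const)
  have hxq : IntervalIntegrable (fun s => x s * (x s - 1) * q s) volume a b :=
    (IntegrableOn.continuousOn_mul hpoly.continuousOn
      (hq.integrableOn_isCompact isCompact_uIcc) isCompact_uIcc).intervalIntegrable
  convert ((hpoly.mul hx).intervalIntegrable a b).sub hxq using 1
  ext s
  simp only [Pi.mul_apply, mul_sub]

theorem sub_eq_integral_snd (hsol : IsSolQ q t₀ x y) (hq : LocallyIntegrable q volume)
    (s t : ℝ) : y t - y s = ∫ r in s..t, x r * (x r - 1) * (x r - q r) := by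
  rw [hsol.2 t, hsol.2 s, add_sub_add_left_eq_sub,
    intervalIntegral.integral_interval_sub_left (hsol.intervalIntegrable_rhs hq _ _)
      (hsol.intervalIntegrable_rhs hq _ _)]

theorem continuous_snd (hsol : IsSolQ q t₀ x y) (hq : LocallyIntegrable q volume) :
    Continuous y :=
  (continuous_const.add (intervalIntegral.continuous_primitive
    (hsol.intervalIntegrable_rhs hq) t₀)).congr fun t => (hsol.2 t).symm

theorem sub_eq_integral_fst (hsol : IsSolQ q t₀ x y) (hq : LocallyIntegrable q volume)
    (s t : ℝ) : x t - x s = ∫ r in s..t, y r :=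
  (intervalIntegral.integral_eq_sub_of_hasDerivAt (fun r _ => hsol.1 r)
    ((hsol.continuous_snd hq).intervalIntegrable s t)).symm

end IsSolQ

theorem stmt_10_general
    (am ap t₀ ε : ℝ) (hamap : am ≤ ap) (hap : ap < 1)
    (hε : 0 < ε)
    (q : ℝ → ℝ) (hqInt : LocallyIntegrable q volume)
    (hq : ∀ᵐ t ∂volume, t ≤ t₀ → am ≤ q t ∧ q t ≤ ap)
    (x y : ℝ → ℝ) (hsol : IsSolQ q t₀ x y)
    (hx : ∀ t : ℝ, t ≤ t₀ → 0 < x t ∧ x t ≤ am - ε ∧ 0 < y t) :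
    Tendsto x atBot (nhds 0) ∧ Tendsto y atBot (nhds 0) := by
  have hrhs_ge (L : ℝ) (hL : 0 ≤ L) (hLx : ∀ t ≤ t₀, L ≤ x t) :
      ∀ᵐ t, t ≤ t₀ → L * ((1 - (am - ε)) * ε) ≤ x t * (x t - 1) * (x t - q t) := by
    filter_upwards [hq] with t hqt ht
    exact mul_le_mul_sub_one_mul_sub hL (hLx t ht) (hx t ht).2.1 (by linarith [(hqt ht).1])
      (by linarith) hε.le
  have hx_int := hsol.sub_eq_integral_fst hqInt
  have hy_int := hsol.sub_eq_integral_snd hqInt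
  refine ⟨tendsto_atBot_zero_of_monotoneOn_Iic ?_ (fun t ht => (hx t ht).1.le) ?_,
    tendsto_atBot_zero_of_monotoneOn_Iic ?_ (fun t ht => (hx t ht).2.2.le) ?_⟩
  · exact monotoneOn_Iic_of_sub_eq_integral hx_int (ae_of_all _ fun t ht => (hx t ht).2.2.le)
  · intro L hL hLx
    have hnonpos := nonpos_of_ae_le_of_sub_eq_integral (fun t _ => hy_int t t₀)
      (fun t _ => hsol.intervalIntegrable_rhs hqInt t t₀) (fun t ht => (hx t ht).2.2.le)
      (hrhs_ge L hL.le hLx)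
    have hc : 0 < (1 - (am - ε)) * ε := mul_pos (by linarith) hε
    linarith [mul_pos hL hc]
  · exact monotoneOn_Iic_of_sub_eq_integral hy_int
      (by simpa using hrhs_ge 0 le_rfl fun t ht => (hx t ht).1.le)
  · intro M hM hMy
    have hnonpos := nonpos_of_ae_le_of_sub_eq_integral (fun t _ => hx_int t t₀)
      (fun t _ => (hsol.continuous_snd hqInt).intervalIntegrable t t₀)
      (fun t ht => (hx t ht).1.le) (ae_of_all _ hMy)
    linarith

theorem stmt_10
    (am ap t₀ ε : ℝ) (ham : 0 < am) (hamap : am ≤ ap) (hap : ap < 1)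
    (hε : 0 < ε) (hεam : 0 < am - ε)
    (q : ℝ → ℝ) (hqInt : LocallyIntegrable q volume)
    (hq : ∀ᵐ t ∂volume, t ≤ t₀ → am ≤ q t ∧ q t ≤ ap)
    (x y : ℝ → ℝ) (hsol : IsSolQ q t₀ x y)
    (hx : ∀ t : ℝ, t ≤ t₀ → 0 < x t ∧ x t ≤ am - ε ∧ 0 < y t) :
    Tendsto x atBot (nhds 0) ∧ Tendsto y atBot (nhds 0) :=
  stmt_10_general am ap t₀ ε hamap hap hε q hqInt hq x y hsol hx
end
end
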